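/- Let g: ℝ → ℝ be m times differentiable, let a ∈ ℝ_{≥0}^m, and set S = ∑ a_i. Then for any s ∈ ℝ, (∏ a_i)·inf_{t ∈ (s-S,s+S)} g^{(m)}(t) ≤ E_{x ~ {-1,1}^m}[x_1 x_2 ⋯ x_m · g(s + a·x)] ≤ (∏ a_i)·sup_{t ∈ (s-S,s+S)} g^{(m)}(t). -/

import Mathlib

/-!
Splitting off the first coordinate, `E[x₁ ⋯ xₘ g(s + a·x)]` is half the difference of the
analogous `(m-1)`-dimensional expectation at `s + a₁` and at `s - a₁`; since that expectation
has derivative the same expectation for `g'`, the mean value theorem writes it as `a₁` times the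
`(m-1)`-dimensional expectation for `g'` at a point of `(s - a₁, s + a₁)`. Inductively the
expectation is `(∏ aᵢ) g⁽ᵐ⁾(ξ)` for some `ξ ∈ (s - S, s + S)` when all `aᵢ > 0`. If some `aᵢ = 0`,
flipping `xᵢ` changes the sign of the summand, so the expectation vanishes, as does `∏ aᵢ`.
-/

open Finset

noncomputable section
open scoped Classical

/-- The ±1 value associated to a Boolean bit. -/
def sgn1 (b : Bool) : ℝ := if b then 1 else -1

/-- Probability of an event under the uniform measure on `{-1,1}^n`. -/
def cubePr (n : ℕ) (P : (Fin n → Bool) → Prop) : ℝ :=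
  ((univ.filter P).card : ℝ) / 2 ^ n

/-- Expectation of a function under the uniform measure on `{-1,1}^n`. -/
def cubeE (n : ℕ) (f : (Fin n → Bool) → ℝ) : ℝ := (∑ x, f x) / 2 ^ n

/-- The linear form `a · x = ∑ aᵢ xᵢ` on `{-1,1}^n`. -/
def lin (n : ℕ) (a : Fin n → ℝ) (x : Fin n → Bool) : ℝ := ∑ i, a i * sgn1 (x i)

/-- The halfspace `1{a · x > t}` as a 0/1-valued function. -/
def halfspace (n : ℕ) (a : Fin n → ℝ) (t : ℝ) (x : Fin n → Bool) : ℝ :=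
  if t < lin n a x then 1 else 0

/-- The influence of coordinate `i` on `f`: the probability that flipping
coordinate `i` changes the value of `f`. -/
def infl (n : ℕ) (i : Fin n) (f : (Fin n → Bool) → ℝ) : ℝ :=
  cubePr n (fun x => f x ≠ f (Function.update x i (!x i)))

/-- The degree-1 Fourier coefficient `f̂({i}) = E[f(x)·xᵢ]`. -/
def fCoeff (n : ℕ) (f : (Fin n → Bool) → ℝ) (i : Fin n) : ℝ :=
  cubeE n (fun x => f x * sgn1 (x i))

/-- The degree-1 Fourier weight `W¹(f) = ∑ᵢ f̂({i})²`. -/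
def W1 (n : ℕ) (f : (Fin n → Bool) → ℝ) : ℝ := ∑ i, (fCoeff n f i) ^ 2

def topFourierCoeff (n : ℕ) (a : Fin n → ℝ) (g : ℝ → ℝ) (s : ℝ) : ℝ :=
  cubeE n (fun x => (∏ i, sgn1 (x i)) * g (s + lin n a x))

lemma cubeE_succ (n : ℕ) (f : (Fin (n + 1) → Bool) → ℝ) :
    cubeE (n + 1) f =
      (cubeE n (fun y => f (Fin.cons true y)) + cubeE n (fun y => f (Fin.cons false y))) / 2 := by
  simp only [cubeE, ← (Fin.consEquiv fun _ => Bool).sum_comp f, Fintype.sum_prod_type,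
    Fintype.sum_bool, pow_succ]
  field_simp
  rfl

lemma lin_cons (n : ℕ) (a : Fin (n + 1) → ℝ) (b : Bool) (y : Fin n → Bool) :
    lin (n + 1) a (Fin.cons b y) = a 0 * sgn1 b + lin n (Fin.tail a) y := by
  simp [lin, Fin.sum_univ_succ, Fin.tail]

lemma topFourierCoeff_zero (a : Fin 0 → ℝ) (g : ℝ → ℝ) (s : ℝ) :
    topFourierCoeff 0 a g s = g s := by
  simp [topFourierCoeff, cubeE, lin]

lemma topFourierCoeff_succ (n : ℕ) (a : Fin (n + 1) → ℝ) (g : ℝ → ℝ) (s : ℝ) :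
    topFourierCoeff (n + 1) a g s =
      (topFourierCoeff n (Fin.tail a) g (s + a 0) -
        topFourierCoeff n (Fin.tail a) g (s - a 0)) / 2 := by
  rw [topFourierCoeff, cubeE_succ]
  simp only [topFourierCoeff, Fin.prod_univ_succ, Fin.cons_zero, Fin.cons_succ, lin_cons, sgn1,
    if_true, Bool.false_eq_true, if_false, mul_one, mul_neg, one_mul, neg_mul,
    ← add_assoc, ← sub_eq_add_neg, cubeE, sum_neg_distrib]
  ring

lemma hasDerivAt_topFourierCoeff (n : ℕ) (a : Fin n → ℝ) {g : ℝ → ℝ}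
    (hg : Differentiable ℝ g) (s : ℝ) :
    HasDerivAt (topFourierCoeff n a g) (topFourierCoeff n a (deriv g) s) s := by
  unfold topFourierCoeff cubeE
  refine .div_const (.fun_sum fun x _ => .const_mul _ ?_) _
  exact (hg _).hasDerivAt.comp_add_const s _

lemma exists_topFourierCoeff_succ_eq (n : ℕ) (a : Fin (n + 1) → ℝ) (ha : 0 < a 0) {g : ℝ → ℝ}
    (hg : Differentiable ℝ g) (s : ℝ) :
    ∃ η ∈ Set.Ioo (s - a 0) (s + a 0),
      topFourierCoeff (n + 1) a g s = a 0 * topFourierCoeff n (Fin.tail a) (deriv g) η := by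
  obtain ⟨η, hη, hslope⟩ := exists_hasDerivAt_eq_slope (topFourierCoeff n (Fin.tail a) g) _
    (by linarith : s - a 0 < s + a 0)
    (fun t _ => (hasDerivAt_topFourierCoeff n _ hg t).continuousAt.continuousWithinAt)
    (fun t _ => hasDerivAt_topFourierCoeff n _ hg t)
  refine ⟨η, hη, ?_⟩
  rw [topFourierCoeff_succ, hslope, show s + a 0 - (s - a 0) = 2 * a 0 by ring]
  field_simp

lemma exists_topFourierCoeff_eq_iteratedDeriv (n : ℕ) {g : ℝ → ℝ} (hg : ContDiff ℝ (n + 1) g)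
    (a : Fin (n + 1) → ℝ) (ha : ∀ i, 0 < a i) (s : ℝ) :
    ∃ ξ ∈ Set.Ioo (s - ∑ i, a i) (s + ∑ i, a i),
      topFourierCoeff (n + 1) a g s = (∏ i, a i) * iteratedDeriv (n + 1) g ξ := by
  induction n generalizing g s with
  | zero =>
    obtain ⟨η, hη, h⟩ := exists_topFourierCoeff_succ_eq 0 a (ha 0) (hg.differentiable (by simp)) s
    refine ⟨η, by simpa using hη, ?_⟩
    simp [h, topFourierCoeff_zero]
  | succ n ih =>
    obtain ⟨η, ⟨hη₁, hη₂⟩, hη⟩ :=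
      exists_topFourierCoeff_succ_eq (n + 1) a (ha 0) (hg.differentiable (by simp)) s
    obtain ⟨ξ, ⟨hξ₁, hξ₂⟩, hξ⟩ := ih hg.deriv' (Fin.tail a) (fun i => ha i.succ) η
    have hsum : ∑ i, a i = a 0 + ∑ i, Fin.tail a i := Fin.sum_univ_succ a
    refine ⟨ξ, ⟨by linarith, by linarith⟩, ?_⟩
    rw [hη, hξ, ← iteratedDeriv_succ', Fin.prod_univ_succ a, mul_assoc]
    rfl

lemma sgn1_not (b : Bool) : sgn1 (!b) = -sgn1 b := by
  cases b <;> simp [sgn1]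

lemma prod_sgn1_update_not {n : ℕ} (x : Fin n → Bool) (j : Fin n) :
    ∏ i, sgn1 (Function.update x j (!x j) i) = -∏ i, sgn1 (x i) := by
  rw [Fintype.prod_eq_mul_prod_compl j, Fintype.prod_eq_mul_prod_compl j (fun i => sgn1 (x i)),
    Function.update_self, sgn1_not, neg_mul]
  congr 2
  refine prod_congr rfl fun i hi => ?_
  rw [Function.update_of_ne (by simpa using hi)]

lemma lin_update_of_eq_zero {n : ℕ} {a : Fin n → ℝ} {j : Fin n} (hj : a j = 0)
    (x : Fin n → Bool) (b : Bool) : lin n a (Function.update x j b) = lin n a x := by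
  refine sum_congr rfl fun i _ => ?_
  rcases eq_or_ne i j with rfl | hij
  · simp [hj]
  · rw [Function.update_of_ne hij]

lemma involutive_update_not {n : ℕ} (j : Fin n) :
    Function.Involutive fun x : Fin n → Bool => Function.update x j (!x j) := fun x => by
  beta_reduce
  rw [Function.update_self, Function.update_idem, Bool.not_not, Function.update_eq_self]

lemma topFourierCoeff_eq_zero_of_eq_zero (n : ℕ) {a : Fin n → ℝ} {j : Fin n} (hj : a j = 0)
    (g : ℝ → ℝ) (s : ℝ) : topFourierCoeff n a g s = 0 := by
  set f : (Fin n → Bool) → ℝ := fun x => (∏ i, sgn1 (x i)) * g (s + lin n a x)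
  have hflip : ∀ x, f x = -f (Function.update x j (!x j)) := fun x => by
    simp only [f, prod_sgn1_update_not, lin_update_of_eq_zero hj, neg_mul, neg_neg]
  have hsum : ∑ x, f x = -∑ x, f x := by
    rw [← sum_neg_distrib]
    exact Fintype.sum_equiv (involutive_update_not j).toPerm _ _ hflip
  rw [topFourierCoeff, cubeE, show ∑ x, f x = 0 by linarith, zero_div]

section ImageIoo

variable {f : ℝ → ℝ} {u v ξ : ℝ}

lemma csInf_image_Ioo_le (hf : ContinuousOn f (Set.Icc u v)) (hξ : ξ ∈ Set.Ioo u v) :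
    sInf (f '' Set.Ioo u v) ≤ f ξ :=
  csInf_le ((isCompact_Icc.bddBelow_image hf).mono (Set.image_mono Set.Ioo_subset_Icc_self))
    (Set.mem_image_of_mem f hξ)

lemma le_csSup_image_Ioo (hf : ContinuousOn f (Set.Icc u v)) (hξ : ξ ∈ Set.Ioo u v) :
    f ξ ≤ sSup (f '' Set.Ioo u v) :=
  le_csSup ((isCompact_Icc.bddAbove_image hf).mono (Set.image_mono Set.Ioo_subset_Icc_self))
    (Set.mem_image_of_mem f hξ)

end ImageIoo

/-- **Fourier coefficients as derivatives.** For `g : ℝ → ℝ` differentiable `m`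
times, `a ∈ ℝ_{≥0}^m`, `S = ∑ aᵢ`, and any `s ∈ ℝ`:
`(∏ aᵢ)·inf_{u∈(s-S,s+S)} g⁽ᵐ⁾(u) ≤ E_x[x₁⋯xₘ·g(s + a·x)] ≤ (∏ aᵢ)·sup_{u∈(s-S,s+S)} g⁽ᵐ⁾(u)`. -/
theorem fourier_is_derivative (m : ℕ) (hm : 0 < m) (g : ℝ → ℝ)
    (hg : ContDiff ℝ m g) (a : Fin m → ℝ) (ha : ∀ i, 0 ≤ a i) (s : ℝ) :
    (∏ i, a i) *
        sInf (iteratedDeriv m g '' Set.Ioo (s - ∑ i, a i) (s + ∑ i, a i)) ≤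
      cubeE m (fun x => (∏ i, sgn1 (x i)) * g (s + lin m a x)) ∧
    cubeE m (fun x => (∏ i, sgn1 (x i)) * g (s + lin m a x)) ≤
      (∏ i, a i) *
        sSup (iteratedDeriv m g '' Set.Ioo (s - ∑ i, a i) (s + ∑ i, a i)) := by
  obtain ⟨n, rfl⟩ : ∃ n, m = n + 1 := ⟨m - 1, by omega⟩
  change _ ≤ topFourierCoeff (n + 1) a g s ∧ topFourierCoeff (n + 1) a g s ≤ _
  have hprod : 0 ≤ ∏ i, a i := prod_nonneg fun i _ => ha i
  by_cases hpos : ∀ i, 0 < a i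
  · obtain ⟨ξ, hξ, hE⟩ := exists_topFourierCoeff_eq_iteratedDeriv n hg a hpos s
    have hcont := hg.continuous_iteratedDeriv (n + 1) le_rfl
    rw [hE]
    exact ⟨mul_le_mul_of_nonneg_left (csInf_image_Ioo_le hcont.continuousOn hξ) hprod,
      mul_le_mul_of_nonneg_left (le_csSup_image_Ioo hcont.continuousOn hξ) hprod⟩
  · obtain ⟨j, hj⟩ := not_forall.mp hpos
    have hj0 : a j = 0 := le_antisymm (not_lt.mp hj) (ha j)
    rw [topFourierCoeff_eq_zero_of_eq_zero _ hj0, prod_eq_zero (mem_univ j) hj0]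
    simp

end
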